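/- Let (A,[·,·],α) be a multiplicative Hom-Leibniz algebra over a field K. Define linear maps α⊗L, α⊗R: A → End(A⊗A) by (α⊗L)(x)(a⊗b) = α(a)⊗[x,b] and (α⊗R)(x)(a⊗b) = α(a)⊗[b,x], for x,a,b ∈ A. Then (α⊗L, α⊗R, α⊗α, A⊗A) is a bimodule of (A,[·,·],α). -/

import Mathlib

/- The operators `α⊗L` and `α⊗R` are the tensor products of `α` with the left and right
multiplications of `A`. Tensoring every operator of a bimodule `(l, r, β, V)` on the left with a
fixed endomorphism `γ` of `W` gives a bimodule on `W ⊗ V`, since each bimodule axiom just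
acquires the factor `γ ∘ γ`. It therefore suffices that `(L, R, α, A)` is a bimodule, and its
axioms are instances of the Hom-Leibniz identity and of multiplicativity. -/

open TensorProduct

/-- A bimodule `(l, r, β, V)` of a Hom-Leibniz algebra `(A, br, α)`. -/
def HomLeibnizBimodule {K A V : Type*} [Field K] [AddCommGroup A] [Module K A]
    [AddCommGroup V] [Module K V]
    (br : A →ₗ[K] A →ₗ[K] A) (α : A →ₗ[K] A)
    (l r : A →ₗ[K] V →ₗ[K] V) (β : V →ₗ[K] V) : Prop :=
  (∀ x y v, l (α x) (l y v) = l (br x y) (β v) + l (α y) (l x v)) ∧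
  (∀ x y v, l (α x) (r y v) = r (α y) (l x v) + r (br x y) (β v)) ∧
  (∀ x y v, r (br x y) (β v) = r (α y) (r x v) + l (α x) (r y v)) ∧
  (∀ x v, β (l x v) = l (α x) (β v)) ∧
  (∀ x v, β (r x v) = r (α x) (β v))

section

variable {K A V W : Type*} [Field K] [AddCommGroup A] [Module K A]
  [AddCommGroup V] [Module K V] [AddCommGroup W] [Module K W]
  {br : A →ₗ[K] A →ₗ[K] A} {α : A →ₗ[K] A}

theorem HomLeibnizBimodule.regular
    (hA : ∀ x y z : A, br (α x) (br y z) = br (br x y) (α z) + br (α y) (br x z))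
    (hmul : ∀ x y : A, α (br x y) = br (α x) (α y)) :
    HomLeibnizBimodule br α br br.flip α :=
  ⟨hA, fun x y v => hA x v y, fun x y v => hA v x y, hmul, fun x v => hmul v x⟩

theorem HomLeibnizBimodule.tensorLeft {l r : A →ₗ[K] V →ₗ[K] V} {β : V →ₗ[K] V}
    (h : HomLeibnizBimodule br α l r β) (γ : W →ₗ[K] W) :
    HomLeibnizBimodule br α
      ((mapBilinear (RingHom.id K) W V W V γ).comp l)
      ((mapBilinear (RingHom.id K) W V W V γ).comp r)
      (map γ β) := by
  obtain ⟨hll, hlr, hrr, hβl, hβr⟩ := h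
  refine ⟨fun x y t => ?_, fun x y t => ?_, fun x y t => ?_, fun x t => ?_, fun x t => ?_⟩ <;>
  induction t using TensorProduct.induction_on with
  | zero => simp only [map_zero, add_zero]
  | tmul w v =>
    simp only [LinearMap.comp_apply, mapBilinear_apply, map_tmul, ← tmul_add]
    congr 1
    apply_assumption
  | add s t hs ht => simp only [map_add, hs, ht] <;> abel

end

/-- for a multiplicative Hom-Leibniz algebra `(A, br, α)`,
the maps `(α⊗L)(x)(a⊗b) = α(a)⊗[x,b]` and `(α⊗R)(x)(a⊗b) = α(a)⊗[b,x]`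
make `(α⊗L, α⊗R, α⊗α, A⊗A)` a bimodule of `A`. -/
theorem tensor_bimodule_of_multiplicative_homLeibniz
    {K A : Type*} [Field K] [AddCommGroup A] [Module K A]
    (br : A →ₗ[K] A →ₗ[K] A) (α : A →ₗ[K] A)
    (hA : ∀ x y z : A, br (α x) (br y z) = br (br x y) (α z) + br (α y) (br x z))
    (hmul : ∀ x y : A, α (br x y) = br (α x) (α y)) :
    HomLeibnizBimodule br α
      ((TensorProduct.mapBilinear (RingHom.id K) A A A A α).comp br)
      ((TensorProduct.mapBilinear (RingHom.id K) A A A A α).comp br.flip)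
      (TensorProduct.map α α) :=
  (HomLeibnizBimodule.regular hA hmul).tensorLeft α
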